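/- The momentum-space Hamiltonian has the emergent pseudo-inversion symmetry: define the involution ι on ℤ×ℤ×{+1,−1} by ι(m,n,l) = (−m−1, −n, −l). Then (i) the vector associated to ι(Q) equals the negative of the vector associated to Q, for every Q (so Q ↦ −Q maps the lattice 𝒬 bijectively to itself exchanging the two layers, using −κ₊ = κ₋ − b₁); and (ii) H_{ιQ, ιQ'}(−k) = H_{Q,Q'}(k) for all Q, Q' and all k ∈ ℝ². -/
import Mathlib


open Real Complex

noncomputable section
open scoped Classical

/-- The momentum-space lattice index set ℤ×ℤ×{+1,−1} (layer label in ℤˣ = {1,−1}). -/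
abbrev Idx : Type := ℤ × ℤ × ℤˣ

/-- The first-shell moiré reciprocal vectors b₁ = k_θ(1,0), b₂ = R b₁, b₃ = R b₂. -/
def bv (kθ : ℝ) : Fin 3 → ℝ × ℝ
  | 0 => (kθ, 0)
  | 1 => (-(kθ / 2), kθ * Real.sqrt 3 / 2)
  | 2 => (-(kθ / 2), -(kθ * Real.sqrt 3 / 2))

/-- The moiré scattering vectors q₁ = (k_θ/√3)(0,1), q₂ = R q₁, q₃ = R q₂. -/
def qv (kθ : ℝ) : Fin 3 → ℝ × ℝ
  | 0 => (0, kθ / Real.sqrt 3)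
  | 1 => (-(kθ / 2), -(kθ / (2 * Real.sqrt 3)))
  | 2 => (kθ / 2, -(kθ / (2 * Real.sqrt 3)))

/-- κ₊ = (b₁+q₁)/2 = (k_θ/2, k_θ/(2√3)) and κ₋ = (b₁−q₁)/2 = (k_θ/2, −k_θ/(2√3)). -/
def kappa (kθ : ℝ) (l : ℤˣ) : ℝ × ℝ := (kθ / 2, ((l : ℤ) : ℝ) * (kθ / (2 * Real.sqrt 3)))

/-- The vector in ℝ² associated to an index (m,n,l): Q(m,n,l) = m b₁ + n b₂ + κ_l. -/
def vecOf (kθ : ℝ) (Q : Idx) : ℝ × ℝ :=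
  ((Q.1 : ℝ)) • bv kθ 0 + ((Q.2.1 : ℝ)) • bv kθ 1 + kappa kθ Q.2.2

/-- The layer index ζ_Q = ±1. -/
def zetaOf (Q : Idx) : ℤ := ((Q.2.2 : ℤ))

/-- Kronecker delta for vectors in ℝ², valued in ℂ. -/
def deltaV (x y : ℝ × ℝ) : ℂ := if x = y then 1 else 0

/-- Kronecker delta for lattice indices, valued in ℂ. -/
def deltaI (Q Q' : Idx) : ℂ := if Q = Q' then 1 else 0

/-- The squared Euclidean norm on ℝ². -/
def sqn (p : ℝ × ℝ) : ℝ := p.1 ^ 2 + p.2 ^ 2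

/-- The momentum-space Hamiltonian entry
H_{Q,Q'}(k) = −α‖k+Q‖² δ_{Q,Q'}
  + V ∑ᵢ (e^{iψζ_Q} δ_{Q−Q', bᵢ} + e^{−iψζ_Q} δ_{Q−Q', −bᵢ})
  + w ∑ᵢ (δ_{Q−Q', qᵢ} + δ_{Q−Q', −qᵢ}). -/
def Hent (kθ α V w ψ : ℝ) (Q Q' : Idx) (k : ℝ × ℝ) : ℂ :=
  (-(α * sqn (k + vecOf kθ Q)) : ℝ) * deltaI Q Q'
  + (V : ℝ) * ∑ i : Fin 3,
      (Complex.exp (Complex.I * ((ψ * (zetaOf Q : ℝ)) : ℝ))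
          * deltaV (vecOf kθ Q - vecOf kθ Q') (bv kθ i)
        + Complex.exp (-(Complex.I * ((ψ * (zetaOf Q : ℝ)) : ℝ)))
          * deltaV (vecOf kθ Q - vecOf kθ Q') (-bv kθ i))
  + (w : ℝ) * ∑ i : Fin 3,
      (deltaV (vecOf kθ Q - vecOf kθ Q') (qv kθ i)
        + deltaV (vecOf kθ Q - vecOf kθ Q') (-qv kθ i))

end

/-- The pseudo-inversion index involution ι(m,n,l) = (−m−1, −n, −l). -/
def iotaIdx (Q : Idx) : Idx := (-Q.1 - 1, -Q.2.1, -Q.2.2)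

lemma vecOf_iota (kθ : ℝ) (Q : Idx) : vecOf kθ (iotaIdx Q) = -vecOf kθ Q := by
  obtain ⟨m, n, l⟩ := Q
  simp only [vecOf, iotaIdx, kappa, bv, Prod.ext_iff, Prod.smul_mk, smul_eq_mul,
    Prod.mk_add_mk, Prod.neg_mk, Units.val_neg, Int.cast_neg, Int.cast_sub, Int.cast_one]
  constructor <;> ring

lemma iota_iota (Q : Idx) : iotaIdx (iotaIdx Q) = Q := by
  obtain ⟨m, n, l⟩ := Q
  simp [iotaIdx]

lemma deltaV_neg (x y : ℝ × ℝ) : deltaV (-x) y = deltaV x (-y) := by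
  simp only [deltaV]
  congr 1
  simp only [eq_iff_iff, neg_eq_iff_eq_neg]

lemma sqn_neg (p : ℝ × ℝ) : sqn (-p) = sqn p := by
  obtain ⟨a, b⟩ := p
  simp [sqn]

/-- Pseudo-inversion symmetry of the momentum-space Hamiltonian: (i) the vector
associated to ι(Q) is the negative of the vector of Q (using −κ₊ = κ₋ − b₁);
(ii) H_{ιQ,ιQ'}(−k) = H_{Q,Q'}(k). -/
theorem momentum_hamiltonian_pseudo_inversion
    (kθ α V w ψ : ℝ) (hkθ : 0 < kθ) (hα : 0 < α) :
    (∀ Q : Idx, vecOf kθ (iotaIdx Q) = -vecOf kθ Q) ∧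
    -(kappa kθ 1) = kappa kθ (-1) - bv kθ 0 ∧
    (∀ (Q Q' : Idx) (k : ℝ × ℝ),
      Hent kθ α V w ψ (iotaIdx Q) (iotaIdx Q') (-k) = Hent kθ α V w ψ Q Q' k) := by
  refine ⟨vecOf_iota kθ, ?_, ?_⟩
  · simp only [kappa, bv, Prod.ext_iff, Prod.neg_mk, Prod.mk_sub_mk, Units.val_one,
      Units.val_neg, Int.cast_neg, Int.cast_one]
    norm_num
    ring
  · intro Q Q' k
    have hdiff : vecOf kθ (iotaIdx Q) - vecOf kθ (iotaIdx Q')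
        = -(vecOf kθ Q - vecOf kθ Q') := by
      rw [vecOf_iota, vecOf_iota]; ring
    have hδ : deltaI (iotaIdx Q) (iotaIdx Q') = deltaI Q Q' := by
      simp only [deltaI]
      congr 1
      simp only [eq_iff_iff]
      constructor
      · intro h; have := congrArg iotaIdx h; simpa [iota_iota] using this
      · intro h; rw [h]
    have hζ : (zetaOf (iotaIdx Q) : ℝ) = -(zetaOf Q : ℝ) := by
      obtain ⟨m, n, l⟩ := Q
      simp [zetaOf, iotaIdx]
    have hk : -k + vecOf kθ (iotaIdx Q) = -(k + vecOf kθ Q) := by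
      rw [vecOf_iota]; ring
    simp only [Hent, hdiff, hδ, hζ, hk, sqn_neg, deltaV_neg, neg_neg, mul_neg]
    push_cast
    simp only [mul_neg, neg_neg]
    have key : ∀ (f g : Fin 3 → ℂ), ∑ i, (f i + g i) = ∑ i, (g i + f i) :=
      fun f g => Finset.sum_congr rfl fun i _ => add_comm _ _
    rw [key]
    congr 1
    exact congrArg _ (key _ _)
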